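/- For each $n \geq 1$, the $n$-th term $A^{(n)}$ of the right series of a skew brace $A$ (defined by $A^{(1)} = A$, $A^{(n+1)} = A^{(n)} * A$) is an ideal of $A$: it is a left ideal and is normal in both $(A,\cdot)$ and $(A,\circ)$. -/
import Mathlib


namespace SB

class SkewBrace (A : Type*) extends Group A where
  circ : A → A → A
  sinv : A → A
  circ_assoc : ∀ a b c : A, circ (circ a b) c = circ a (circ b c)
  one_circ : ∀ a : A, circ 1 a = a
  circ_one : ∀ a : A, circ a 1 = a
  sinv_circ : ∀ a : A, circ (sinv a) a = 1
  circ_sinv : ∀ a : A, circ a (sinv a) = 1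
  brace : ∀ a b c : A, circ a (b * c) = circ a b * a⁻¹ * circ a c

open SkewBrace

variable {A : Type*} [SkewBrace A]

/-- The lambda map: `lam a b = a⁻¹ ⬝ (a ∘ b)`. -/
def lam (a b : A) : A := a⁻¹ * circ a b

/-- The star product: `star a b = a⁻¹ ⬝ (a ∘ b) ⬝ b⁻¹`. -/
def star (a b : A) : A := a⁻¹ * circ a b * b⁻¹

/-- For sets X, Y, the subgroup of (A, mul) generated by all star products x * y. -/
def starSub (X Y : Set A) : Subgroup A :=
  Subgroup.closure {z | ∃ x ∈ X, ∃ y ∈ Y, z = star x y}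

/-- The left series: `leftSeries n` is the term A^(n+1), so `leftSeries 0 = A`. -/
def leftSeries : ℕ → Subgroup A
  | 0 => ⊤
  | n + 1 => starSub (Set.univ) ((leftSeries n : Subgroup A) : Set A)

/-- The right series: `rightSeries n` is the term A^((n+1)), so `rightSeries 0 = A`. -/
def rightSeries : ℕ → Subgroup A
  | 0 => ⊤
  | n + 1 => starSub ((rightSeries n : Subgroup A) : Set A) (Set.univ)

/- ### Auxiliary lemmas -/

lemma circ_eq (a b : A) : circ a b = a * lam a b := by
  unfold lam; group

lemma lam_mul (a b c : A) : lam a (b * c) = lam a b * lam a c := by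
  unfold lam; rw [brace]; group

lemma lam_one (a : A) : lam a 1 = 1 := by
  unfold lam; rw [circ_one]; group

lemma lam_inv (a b : A) : lam a b⁻¹ = (lam a b)⁻¹ := by
  have h := lam_mul a b b⁻¹
  rw [mul_inv_cancel, lam_one] at h
  exact eq_inv_of_mul_eq_one_right h.symm

lemma circ_inv (a b : A) : circ a b⁻¹ = a * (circ a b)⁻¹ * a := by
  have h := brace a b b⁻¹
  rw [mul_inv_cancel, circ_one] at h
  apply mul_left_cancel (a := circ a b * a⁻¹)
  rw [← mul_assoc, ← h]; group

lemma lam_lam (a b c : A) : lam a (lam b c) = lam (circ a b) c := by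
  unfold lam
  rw [brace, circ_inv, ← circ_assoc]
  group

lemma lam_sinv (a : A) : lam a (sinv a) = a⁻¹ := by
  unfold lam; rw [circ_sinv]; group

lemma sinv_sinv (a : A) : sinv (sinv a) = a := by
  have : circ (sinv (sinv a)) (circ (sinv a) a) = circ (sinv (sinv a)) 1 := by
    rw [sinv_circ]
  rw [circ_one, ← circ_assoc, sinv_circ, one_circ] at this
  exact this.symm

lemma lam_eq_star (a b : A) : lam a b = star a b * b := by
  unfold lam star; group

lemma star_eq (a b : A) : star a b = lam a b * b⁻¹ := by
  unfold lam star; group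

lemma lam_star (a x y : A) : lam a (star x y) = star (circ (circ a x) (sinv a)) (lam a y) := by
  have key : circ (circ (circ a x) (sinv a)) a = circ a x := by
    rw [circ_assoc, sinv_circ, circ_one]
  rw [star_eq x y, star_eq, lam_mul, lam_inv, lam_lam, lam_lam, key]

lemma conj_star (a x y : A) : a * star x y * a⁻¹ = (star x a)⁻¹ * star x (a * y) := by
  have h : star x (a * y) = star x a * (a * star x y * a⁻¹) := by
    unfold star
    rw [brace]; group
  rw [h]; group

lemma circ_conj (a z : A) :
    circ (circ a z) (sinv a) = a * (lam a z * lam a (star z (sinv a))) * a⁻¹ := by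
  rw [circ_assoc, circ_eq a (circ z (sinv a)), circ_eq z (sinv a), lam_mul,
    lam_eq_star z (sinv a), lam_mul, lam_sinv]
  group

lemma circ_swap (a x : A) :
    circ x a = circ a (circ (circ (sinv a) x) (sinv (sinv a))) := by
  rw [sinv_sinv, circ_assoc, ← circ_assoc a, circ_sinv, one_circ]

/-- If a subgroup satisfies the three ideal properties, it absorbs star on the right. -/
lemma star_mem_of_ideal (S : Subgroup A)
    (h1 : ∀ a : A, ∀ x ∈ S, lam a x ∈ S)
    (h2 : ∀ a : A, ∀ x ∈ S, a * x * a⁻¹ ∈ S)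
    (h3 : ∀ a : A, ∀ x ∈ S, circ (circ a x) (sinv a) ∈ S)
    {x : A} (hx : x ∈ S) (a : A) : star x a ∈ S := by
  have hx1 : circ (circ (sinv a) x) (sinv (sinv a)) ∈ S := h3 (sinv a) x hx
  set x₁ := circ (circ (sinv a) x) (sinv (sinv a)) with hx₁def
  have key : star x a = x⁻¹ * (a * lam a x₁ * a⁻¹) := by
    unfold star
    rw [circ_swap a x, ← hx₁def, circ_eq a x₁]
    group
  rw [key]
  exact S.mul_mem (S.inv_mem hx) (h2 a _ (h1 a _ hx1))

/-- Every term of the right series is an ideal: a left ideal, normal in (A, mul),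
and normal in (A, circ). (Here rightSeries n = A^((n+1)).) -/
theorem rightSeries_ideal {A : Type*} [SkewBrace A] :
    ∀ n : ℕ,
      (∀ a : A, ∀ x ∈ rightSeries (A := A) n, lam a x ∈ rightSeries (A := A) n) ∧
      (∀ a : A, ∀ x ∈ rightSeries (A := A) n, a * x * a⁻¹ ∈ rightSeries (A := A) n) ∧
      (∀ a : A, ∀ x ∈ rightSeries (A := A) n,
        circ (circ a x) (sinv a) ∈ rightSeries (A := A) n) := by
  intro n
  induction n with
  | zero => exact ⟨fun _ _ _ => trivial, fun _ _ _ => trivial, fun _ _ _ => trivial⟩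
  | succ n ih =>
    obtain ⟨h1, h2, h3⟩ := ih
    set S : Subgroup A := rightSeries n with hS
    set G : Set A := {z | ∃ x ∈ (S : Set A), ∃ y ∈ (Set.univ : Set A), z = star x y} with hG
    have hT : rightSeries (A := A) (n + 1) = Subgroup.closure G := rfl
    set T : Subgroup A := Subgroup.closure G with hTdef
    -- every generator lies in S
    have hgen : ∀ x ∈ S, ∀ y : A, star x y ∈ G := by
      intro x hx y
      exact ⟨x, hx, y, trivial, rfl⟩
    have hGS : G ⊆ (S : Set A) := by
      rintro z ⟨x, hx, y, -, rfl⟩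
      exact star_mem_of_ideal S h1 h2 h3 hx y
    have hTS : T ≤ S := Subgroup.closure_le S |>.mpr hGS
    rw [hT]
    -- (a) left ideal
    have pa : ∀ a : A, ∀ x ∈ T, lam a x ∈ T := by
      intro a x hx
      refine Subgroup.closure_induction (p := fun g _ => lam a g ∈ T) ?_ ?_ ?_ ?_ hx
      · rintro z ⟨x, hxS, y, -, rfl⟩
        show lam a (star x y) ∈ T
        rw [lam_star]
        exact Subgroup.subset_closure (hgen _ (h3 a x hxS) _)
      · show lam a (1 : A) ∈ T
        rw [lam_one]; exact T.one_mem
      · intro u v _ _ hu hv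
        show lam a (u * v) ∈ T
        rw [lam_mul]; exact T.mul_mem hu hv
      · intro u _ hu
        show lam a u⁻¹ ∈ T
        rw [lam_inv]; exact T.inv_mem hu
    -- (b) normal in (A, ·)
    have pb : ∀ a : A, ∀ x ∈ T, a * x * a⁻¹ ∈ T := by
      intro a x hx
      refine Subgroup.closure_induction (p := fun g _ => a * g * a⁻¹ ∈ T) ?_ ?_ ?_ ?_ hx
      · rintro z ⟨x, hxS, y, -, rfl⟩
        show a * star x y * a⁻¹ ∈ T
        rw [conj_star]
        exact T.mul_mem (T.inv_mem (Subgroup.subset_closure (hgen _ hxS _)))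
          (Subgroup.subset_closure (hgen _ hxS _))
      · show a * (1 : A) * a⁻¹ ∈ T
        rw [mul_one, mul_inv_cancel]; exact T.one_mem
      · intro u v _ _ hu hv
        show a * (u * v) * a⁻¹ ∈ T
        have : a * (u * v) * a⁻¹ = (a * u * a⁻¹) * (a * v * a⁻¹) := by group
        rw [this]; exact T.mul_mem hu hv
      · intro u _ hu
        show a * u⁻¹ * a⁻¹ ∈ T
        have : a * u⁻¹ * a⁻¹ = (a * u * a⁻¹)⁻¹ := by group
        rw [this]; exact T.inv_mem hu
    -- (c) normal in (A, ∘)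
    have pc : ∀ a : A, ∀ z ∈ T, circ (circ a z) (sinv a) ∈ T := by
      intro a z hz
      rw [circ_conj]
      have hstar : star z (sinv a) ∈ T :=
        Subgroup.subset_closure (hgen z (hTS hz) (sinv a))
      exact pb a _ (T.mul_mem (pa a z hz) (pa a _ hstar))
    exact ⟨pa, pb, pc⟩

end SB
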